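/- arXiv:1903.01983 — 2 statements merged into one kernel-verified Lean document; each statement's English description precedes it below -/
import Mathlib

section
/- For every complex s with Re(s) > 1, the Mellin transform ∫_0^∞ x^{s−1} Θ(x) dx equals ξ(s) := (1/2) s(s−1) π^{−s/2} Γ(s/2) ζ(s). -/
/-
Writing `φ y = (4π²y⁴ - 6πy²) e^{-πy²}`, one has `Θ x = ∑_{n ≥ 1} φ (n x)`. Since the Mellin
transform turns `φ (n x)` into `n^{-s}` times the transform of `φ`, and the double sum-integral
converges absolutely for `Re s > 1`, the transform of `Θ` is `ζ(s)` times that of `φ`. The latter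
is a combination of Gaussian moments `∫ x^{w-1} e^{-πx²} dx = π^{-w/2} Γ(w/2) / 2` at
`w = s + 4` and `w = s + 2`, and the functional equation of `Γ` collapses it to
`s (s - 1) / 2 · π^{-s/2} Γ(s/2)`.
-/

open Real MeasureTheory

noncomputable def Theta (x : ℝ) : ℝ :=
  2 * x ^ 2 * ∑' n : ℕ+, (2 * π ^ 2 * (n : ℝ) ^ 4 * x ^ 2 - 3 * π * (n : ℝ) ^ 2) *
    Real.exp (-π * (n : ℝ) ^ 2 * x ^ 2)

open Complex Set

lemma hasSum_pnat_cpow_neg_riemannZeta {s : ℂ} (hs : 1 < s.re) :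
    HasSum (fun n : ℕ+ => (n : ℂ) ^ (-s)) (riemannZeta s) := by
  rw [hasSum_pnat_iff_hasSum_succ (f := fun m : ℕ => (m : ℂ) ^ (-s)),
    zeta_eq_tsum_one_div_nat_add_one_cpow hs]
  simp_rw [Nat.cast_add_one, cpow_neg, ← one_div]
  exact_mod_cast ((summable_nat_add_iff 1).mpr (Complex.summable_one_div_nat_cpow.mpr hs)).hasSum

section Mellin

variable {E : Type*} [NormedAddCommGroup E] [NormedSpace ℂ E]

lemma HasMellin.comp_mul_left {f : ℝ → E} {s : ℂ} {m : E} (hf : HasMellin f s m) {a : ℝ}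
    (ha : 0 < a) :
    HasMellin (fun t => f (a * t)) s ((a : ℂ) ^ (-s) • m) :=
  ⟨(MellinConvergent.comp_mul_left ha).mpr hf.1, by rw [mellin_comp_mul_left f s ha, hf.2]⟩

lemma HasMellin.comp_rpow {f : ℝ → E} {s : ℂ} {m : E} {a : ℝ} (ha : a ≠ 0)
    (hf : HasMellin f (s / a) m) :
    HasMellin (fun t => f (t ^ a)) s (|a|⁻¹ • m) :=
  ⟨(MellinConvergent.comp_rpow ha).mpr hf.1, by rw [mellin_comp_rpow, hf.2]⟩

lemma HasMellin.cpow_smul {f : ℝ → E} {s : ℂ} {m : E} {a : ℂ} (hf : HasMellin f (s + a) m) :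
    HasMellin (fun t => (t : ℂ) ^ a • f t) s m :=
  ⟨MellinConvergent.cpow_smul.mpr hf.1, by rw [mellin_cpow_smul, hf.2]⟩

lemma setIntegral_norm_cpow_smul_comp_mul_left (f : ℝ → E) (s : ℂ) {a : ℝ} (ha : 0 < a) :
    ∫ t : ℝ in Ioi 0, ‖(t : ℂ) ^ (s - 1) • f (a * t)‖ =
      a ^ (-s.re) * ∫ t : ℝ in Ioi 0, ‖(t : ℂ) ^ (s - 1) • f t‖ := by
  have hpt : ∀ t ∈ Ioi (0 : ℝ), ‖(t : ℂ) ^ (s - 1) • f (a * t)‖ =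
      a ^ (1 - s.re) * ‖((a * t : ℝ) : ℂ) ^ (s - 1) • f (a * t)‖ := by
    intro t ht
    rw [norm_smul, norm_smul, norm_cpow_eq_rpow_re_of_pos ht,
      norm_cpow_eq_rpow_re_of_pos (mul_pos ha ht), sub_re, one_re, Real.mul_rpow ha.le ht.le,
      ← mul_assoc, ← mul_assoc, ← Real.rpow_add ha]
    simp
  rw [setIntegral_congr_fun measurableSet_Ioi hpt, integral_const_mul,
    integral_comp_mul_left_Ioi (fun u => ‖(u : ℂ) ^ (s - 1) • f u‖) 0 ha, mul_zero,
    smul_eq_mul, ← mul_assoc, ← Real.rpow_neg_one, ← Real.rpow_add ha]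
  ring_nf

theorem mellin_tsum_comp_pnat_mul {f : ℝ → E} {s : ℂ} (hs : 1 < s.re)
    (hf : MellinConvergent f s) :
    mellin (fun t => ∑' n : ℕ+, f (n * t)) s = riemannZeta s • mellin f s := by
  have hn (n : ℕ+) : (0 : ℝ) < n := by positivity
  have hF_int (n : ℕ+) : MellinConvergent (fun t => f (n * t)) s :=
    (MellinConvergent.comp_mul_left (hn n)).mpr hf
  have hF_sum :
      Summable fun n : ℕ+ => ∫ t : ℝ in Ioi 0, ‖(t : ℂ) ^ (s - 1) • f (n * t)‖ := by
    simp_rw [setIntegral_norm_cpow_smul_comp_mul_left f s (hn _)]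
    refine Summable.mul_right _ ?_
    exact (Real.summable_nat_rpow.mpr (by linarith)).comp_injective PNat.coe_injective
  have hF_mellin : HasSum (fun n : ℕ+ => mellin (fun t => f (n * t)) s)
      (riemannZeta s • mellin f s) := by
    simp_rw [mellin_comp_mul_left f s (hn _)]
    exact_mod_cast (hasSum_pnat_cpow_neg_riemannZeta hs).smul_const (mellin f s)
  rw [← (hasSum_integral_of_summable_integral_norm hF_int hF_sum).unique hF_mellin, mellin]
  refine setIntegral_congr_fun measurableSet_Ioi fun t _ => ?_
  exact (tsum_const_smul'' _).symm

end Mellin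

lemma hasMellin_exp_neg {s : ℂ} (hs : 0 < s.re) :
    HasMellin (fun t : ℝ => (rexp (-t) : ℂ)) s (Gamma s) := by
  refine ⟨?_, by rw [← GammaIntegral_eq_mellin, Complex.Gamma_eq_integral hs]⟩
  refine (Complex.GammaIntegral_convergent hs).congr_fun (fun t _ => ?_) measurableSet_Ioi
  rw [smul_eq_mul, mul_comm]

lemma hasMellin_exp_neg_pi_mul_sq {s : ℂ} (hs : 0 < s.re) :
    HasMellin (fun t : ℝ => (rexp (-π * t ^ 2) : ℂ)) s (Gammaℝ s / 2) := by
  have hexp := (hasMellin_exp_neg (s := s / 2) (by simpa [div_ofNat_re] using hs)).comp_mul_left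
    pi_pos
  have h := HasMellin.comp_rpow two_ne_zero (by exact_mod_cast hexp)
  convert h using 1
  · simp [neg_mul]
  · rw [Gammaℝ_def, neg_div]
    simp only [abs_two, real_smul, smul_eq_mul]
    push_cast
    ring

noncomputable def thetaKernel (y : ℝ) : ℝ :=
  (4 * π ^ 2 * y ^ 4 - 6 * π * y ^ 2) * rexp (-π * y ^ 2)

lemma Theta_eq_tsum_thetaKernel (x : ℝ) : Theta x = ∑' n : ℕ+, thetaKernel (n * x) := by
  rw [Theta, ← tsum_mul_left]
  congr 1 with n
  rw [thetaKernel]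
  ring_nf

lemma hasMellin_thetaKernel {s : ℂ} (hs : 0 < s.re) :
    HasMellin (fun y => (thetaKernel y : ℂ)) s (s * (s - 1) / 2 * Gammaℝ s) := by
  have hre₂ : 0 < (s + 2).re := by simp only [add_re, re_ofNat]; linarith
  have hre₄ : 0 < (s + 4).re := by simp only [add_re, re_ofNat]; linarith
  have hs₀ : s ≠ 0 := fun h => by simp [h] at hs
  have hs₂ : s + 2 ≠ 0 := fun h => by simp [h] at hre₂
  have h₄ := (hasMellin_exp_neg_pi_mul_sq hre₄).cpow_smul
  have h₂ := (hasMellin_exp_neg_pi_mul_sq hre₂).cpow_smul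
  have h := hasMellin_sub (hasMellin_const_smul h₄.1 (4 * π ^ 2 : ℂ)).1
    (hasMellin_const_smul h₂.1 (6 * π : ℂ)).1
  rw [mellin_const_smul, mellin_const_smul, h₄.2, h₂.2] at h
  convert h using 1
  · ext y
    simp only [thetaKernel, smul_eq_mul]
    push_cast
    simp only [cpow_ofNat]
    ring
  · rw [show s + 4 = s + 2 + 2 by ring, Gammaℝ_add_two hs₂, Gammaℝ_add_two hs₀]
    have hπ : (π : ℂ) ≠ 0 := ofReal_ne_zero.mpr pi_ne_zero
    simp only [smul_eq_mul]
    field_simp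
    ring

theorem mellin_theta (s : ℂ) (hs : 1 < s.re) :
    ∫ x in Set.Ioi (0 : ℝ), (x : ℂ) ^ (s - 1) * (Theta x : ℂ) =
      (1 / 2) * s * (s - 1) * (π : ℂ) ^ (-s / 2) * Complex.Gamma (s / 2) * riemannZeta s := by
  have hΘ := hasMellin_thetaKernel (s := s) (by linarith)
  have h := mellin_tsum_comp_pnat_mul hs hΘ.1
  rw [hΘ.2] at h
  simp_rw [mellin, smul_eq_mul, ← ofReal_tsum, ← Theta_eq_tsum_thetaKernel] at h
  rw [h, Gammaℝ_def]
  ring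
end

section
/- For x > 0, x Σ_{n≥1} n K_1(2xn√π) = √π ∫_0^∞ e^{−(xy)²} ( y^{−3} Σ_{n≥1} n² e^{−πn²/y²} ) dy. -/
/-!
Substituting `t = y⁻²` turns `∫₀^∞ y⁻³ exp (-(p / y² + q y²)) dy` into
`½ ∫₀^∞ exp (-(p t + q / t)) dt`, and the further substitution `t = √(q / p) eˢ` makes this
`√(q / p) K₁(2√(pq))`, by the evenness of `cosh`. With `p = π n²`, `q = x²` the `n`-th term of the
integrand series integrates to `x n K₁(2xn√π) / √π`. All terms are nonnegative and
`K₁(b) ≤ e^{a - b} K₁(a)` for `a ≤ b`, so the integrals form a summable series and the sum and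
the integral may be interchanged.
-/

open Real MeasureTheory

noncomputable def besselK (s : ℝ) (x : ℝ) : ℝ :=
  ∫ t in Set.Ioi (0 : ℝ), Real.exp (-x * Real.cosh t) * Real.cosh (s * t)

open Set

theorem integral_comp_exp (g : ℝ → ℝ) :
    ∫ t, exp t * g (exp t) = ∫ u in Ioi 0, g u := by
  have h := integral_image_eq_integral_abs_deriv_smul MeasurableSet.univ
    (fun t _ => (hasDerivAt_exp t).hasDerivWithinAt) exp_injective.injOn g
  simpa [range_exp] using h.symm

theorem integrable_comp_exp_iff (g : ℝ → ℝ) :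
    Integrable (fun t => exp t * g (exp t)) ↔ IntegrableOn g (Ioi 0) := by
  have h := integrableOn_image_iff_integrableOn_abs_deriv_smul MeasurableSet.univ
    (fun t _ => (hasDerivAt_exp t).hasDerivWithinAt) exp_injective.injOn g
  simpa [range_exp] using h.symm

theorem eqOn_comp_rpow_neg_two (g : ℝ → ℝ) :
    EqOn (fun y => (|(-2 : ℝ)| * y ^ ((-2 : ℝ) - 1)) • g (y ^ (-2 : ℝ)))
      (fun y => 2 * (y ^ (-3 : ℤ) * g (y ^ 2)⁻¹)) (Ioi 0) := by
  intro y (hy : 0 < y)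
  have h3 : y ^ ((-2 : ℝ) - 1) = y ^ (-3 : ℤ) := by norm_num [← rpow_intCast]
  have h2 : y ^ (-2 : ℝ) = (y ^ 2)⁻¹ := by norm_num [rpow_neg hy.le]
  simp only [h3, h2, smul_eq_mul, abs_neg, abs_two, mul_assoc]

theorem integral_zpow_neg_three_mul_comp_inv_sq (g : ℝ → ℝ) :
    ∫ y in Ioi 0, y ^ (-3 : ℤ) * g (y ^ 2)⁻¹ = 2⁻¹ * ∫ t in Ioi 0, g t := by
  rw [← integral_comp_rpow_Ioi g (p := -2) (by norm_num),
    setIntegral_congr_fun measurableSet_Ioi (eqOn_comp_rpow_neg_two g),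
    integral_const_mul, inv_mul_cancel_left₀ two_ne_zero]

theorem integrableOn_zpow_neg_three_mul_comp_inv_sq_iff (g : ℝ → ℝ) :
    IntegrableOn (fun y => y ^ (-3 : ℤ) * g (y ^ 2)⁻¹) (Ioi 0) ↔ IntegrableOn g (Ioi 0) := by
  rw [← integrableOn_Ioi_comp_rpow_iff g (p := -2) (by norm_num),
    integrableOn_congr_fun (eqOn_comp_rpow_neg_two g) measurableSet_Ioi]
  exact (integrable_const_mul_iff (isUnit_iff_ne_zero.2 two_ne_zero) _).symm

theorem integrableOn_exp_neg_mul_add_div {p q : ℝ} (hp : 0 < p) (hq : 0 ≤ q) :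
    IntegrableOn (fun t => exp (-(p * t + q / t))) (Ioi 0) := by
  refine (exp_neg_integrableOn_Ioi 0 hp).mono' ?_ ?_
  · refine ContinuousOn.aestronglyMeasurable (ContinuousOn.rexp ?_) measurableSet_Ioi
    fun_prop (disch := exact fun t (ht : 0 < t) => ht.ne')
  · filter_upwards [ae_restrict_mem measurableSet_Ioi] with t (ht : 0 < t)
    rw [norm_of_nonneg (exp_nonneg _), exp_le_exp]
    have := div_nonneg hq ht.le
    linarith

theorem besselK_one_eq (b : ℝ) : besselK 1 b = ∫ t in Ioi 0, exp (-b * cosh t) * cosh t := by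
  simp only [besselK, one_mul]

theorem exp_neg_mul_exp_add_div_exp (a t : ℝ) :
    exp (-(a * exp t + a / exp t)) = exp (-(2 * a) * cosh t) := by
  rw [cosh_eq, exp_neg t]
  congr 1
  field_simp

theorem integrable_exp_mul_exp_neg_mul_cosh {a : ℝ} (ha : 0 < a) :
    Integrable fun t => exp t * exp (-(2 * a) * cosh t) := by
  simpa only [exp_neg_mul_exp_add_div_exp] using
    (integrable_comp_exp_iff _).2 (integrableOn_exp_neg_mul_add_div ha ha.le)

theorem integrableOn_besselK_one_integrand {b : ℝ} (hb : 0 < b) :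
    IntegrableOn (fun t => exp (-b * cosh t) * cosh t) (Ioi 0) := by
  have h := (integrable_exp_mul_exp_neg_mul_cosh (half_pos hb)).integrableOn (s := Ioi 0)
  rw [mul_div_cancel₀ b two_ne_zero] at h
  refine h.mono' (by fun_prop) ?_
  filter_upwards [ae_restrict_mem measurableSet_Ioi] with t (ht : 0 < t)
  rw [norm_of_nonneg (by positivity), mul_comm]
  gcongr
  rw [cosh_eq]
  linarith [exp_le_exp.2 (neg_le_self ht.le)]

theorem integral_exp_neg_mul_add_div_self {a : ℝ} (ha : 0 < a) :
    ∫ u in Ioi 0, exp (-(a * u + a / u)) = 2 * besselK 1 (2 * a) := by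
  set E : ℝ → ℝ := fun t => exp (-(2 * a) * cosh t)
  have hE_neg (t : ℝ) : E (-t) = E t := by simp only [E, cosh_neg]
  have hE_abs (t : ℝ) : E |t| = E t := by simp only [E, cosh_abs]
  have hE : Integrable fun t => exp t * E t := integrable_exp_mul_exp_neg_mul_cosh ha
  have hE' : Integrable fun t => exp (-t) * E t := by
    simpa only [hE_neg] using hE.comp_neg
  have h_sym : ∫ t, exp (-t) * E t = ∫ t, exp t * E t := by
    simpa only [hE_neg] using integral_neg_eq_self (fun t => exp t * E t) volume
  have h_even : ∫ t, 2 * (cosh |t| * E |t|) = (∫ t, exp t * E t) + ∫ t, exp (-t) * E t := by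
    rw [← integral_add hE hE']
    congr 1 with t
    rw [cosh_abs, hE_abs, cosh_eq]
    ring
  calc ∫ u in Ioi 0, exp (-(a * u + a / u))
      = ∫ t, exp t * E t := by
        simp only [← integral_comp_exp, exp_neg_mul_exp_add_div_exp, E]
    _ = 2⁻¹ * ∫ t, 2 * (cosh |t| * E |t|) := by
        rw [h_even, h_sym]
        ring
    _ = 2 * besselK 1 (2 * a) := by
        rw [integral_comp_abs (f := fun t => 2 * (cosh t * E t)), integral_const_mul,
          besselK_one_eq]
        simp only [E, mul_comm (cosh _)]
        ring

theorem integral_exp_neg_mul_add_div {p q : ℝ} (hp : 0 < p) (hq : 0 < q) :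
    ∫ t in Ioi 0, exp (-(p * t + q / t)) = 2 * √(q / p) * besselK 1 (2 * √(p * q)) := by
  set c := √(q / p)
  have hc : 0 < c := sqrt_pos.2 (div_pos hq hp)
  have hpc : p * c = √(p * q) := by
    conv_lhs => rw [← sqrt_sq hp.le]
    rw [← sqrt_mul (sq_nonneg p)]
    congr 1
    field_simp
  have hqc : q / c = √(p * q) := by
    have hc_sq : c ^ 2 = q / p := sq_sqrt (div_pos hq hp).le
    rw [← hpc, div_eq_iff hc.ne']
    field_simp at hc_sq
    linear_combination -hc_sq
  have h := integral_comp_mul_left_Ioi' (fun t => exp (-(p * t + q / t))) 0 hc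
  rw [mul_zero] at h
  simp only [smul_eq_mul, ← mul_assoc, hpc, div_mul_eq_div_div, hqc] at h
  rw [← h, integral_exp_neg_mul_add_div_self (sqrt_pos.2 (mul_pos hp hq))]
  ring

theorem exp_neg_sq_mul_zpow_mul_exp_eq (x m : ℝ) :
    (fun y : ℝ => exp (-(x * y) ^ 2) * (y ^ (-3 : ℤ) * (m ^ 2 * exp (-π * m ^ 2 / y ^ 2)))) =
      fun y => m ^ 2 * (y ^ (-3 : ℤ) * exp (-(π * m ^ 2 * (y ^ 2)⁻¹ + x ^ 2 / (y ^ 2)⁻¹))) := by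
  ext y
  have h_exp : exp (-(π * m ^ 2 * (y ^ 2)⁻¹ + x ^ 2 / (y ^ 2)⁻¹)) =
      exp (-(x * y) ^ 2) * exp (-π * m ^ 2 / y ^ 2) := by
    rw [← exp_add, div_inv_eq_mul]
    ring_nf
  rw [h_exp]
  ring

theorem integral_exp_neg_sq_mul_zpow_mul_exp {x m : ℝ} (hx : 0 < x) (hm : 0 < m) :
    ∫ y in Ioi 0, exp (-(x * y) ^ 2) * (y ^ (-3 : ℤ) * (m ^ 2 * exp (-π * m ^ 2 / y ^ 2))) =
      x * m / √π * besselK 1 (2 * x * m * √π) := by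
  have hπ : 0 < √π := sqrt_pos.2 pi_pos
  have h_ratio : √(x ^ 2 / (π * m ^ 2)) = x / (m * √π) := by
    rw [sqrt_div' _ (by positivity), sqrt_sq hx.le, sqrt_mul pi_pos.le, sqrt_sq hm.le, mul_comm]
  have h_prod : √(π * m ^ 2 * x ^ 2) = x * m * √π := by
    rw [sqrt_mul (by positivity), sqrt_mul pi_pos.le, sqrt_sq hm.le, sqrt_sq hx.le]
    ring
  rw [exp_neg_sq_mul_zpow_mul_exp_eq, integral_const_mul,
    integral_zpow_neg_three_mul_comp_inv_sq fun t => exp (-(π * m ^ 2 * t + x ^ 2 / t)),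
    integral_exp_neg_mul_add_div (by positivity) (by positivity), h_ratio, h_prod]
  field_simp

theorem integrableOn_exp_neg_sq_mul_zpow_mul_exp (x : ℝ) {m : ℝ} (hm : m ≠ 0) :
    IntegrableOn
      (fun y => exp (-(x * y) ^ 2) * (y ^ (-3 : ℤ) * (m ^ 2 * exp (-π * m ^ 2 / y ^ 2))))
      (Ioi 0) := by
  rw [exp_neg_sq_mul_zpow_mul_exp_eq]
  refine Integrable.const_mul ?_ _
  exact (integrableOn_zpow_neg_three_mul_comp_inv_sq_iff
    fun t => exp (-(π * m ^ 2 * t + x ^ 2 / t))).2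
    (integrableOn_exp_neg_mul_add_div (by positivity) (sq_nonneg x))

theorem besselK_one_nonneg (b : ℝ) : 0 ≤ besselK 1 b := by
  rw [besselK_one_eq]
  exact setIntegral_nonneg measurableSet_Ioi fun t _ => by positivity

theorem besselK_one_le_exp_mul {a b : ℝ} (ha : 0 < a) (hab : a ≤ b) :
    besselK 1 b ≤ exp (a - b) * besselK 1 a := by
  rw [besselK_one_eq, besselK_one_eq, ← integral_const_mul]
  refine integral_mono_of_nonneg (Filter.Eventually.of_forall fun t => by positivity)
    ((integrableOn_besselK_one_integrand ha).const_mul _)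
    (Filter.Eventually.of_forall fun t => ?_)
  have h_exp : exp (-b * cosh t) ≤ exp (a - b) * exp (-a * cosh t) := by
    rw [← exp_add, exp_le_exp]
    nlinarith [one_le_cosh t]
  simpa only [mul_assoc] using mul_le_mul_of_nonneg_right h_exp (cosh_pos t).le

theorem summable_mul_besselK_one_mul {c : ℝ} (hc : 0 < c) :
    Summable fun n : ℕ => (n : ℝ) * besselK 1 (c * n) := by
  have hr : ‖exp (-c)‖ < 1 := by
    rw [norm_of_nonneg (exp_nonneg _), exp_lt_one_iff]
    linarith
  refine Summable.of_nonneg_of_le (fun n => mul_nonneg n.cast_nonneg (besselK_one_nonneg _))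
    (fun n => ?_) ((summable_pow_mul_geometric_of_norm_lt_one 1 hr).mul_left (exp c * besselK 1 c))
  rcases Nat.eq_zero_or_pos n with rfl | hn
  · simp
  have hcn : c ≤ c * n := le_mul_of_one_le_right hc.le (Nat.one_le_cast.2 hn)
  calc (n : ℝ) * besselK 1 (c * n) ≤ n * (exp (c - c * n) * besselK 1 c) := by
        gcongr
        exact besselK_one_le_exp_mul hc hcn
    _ = exp c * besselK 1 c * ((n : ℝ) ^ 1 * exp (-c) ^ n) := by
        rw [← exp_nat_mul, sub_eq_add_neg, exp_add]
        ring_nf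

theorem series_integral_identity (x : ℝ) (hx : 0 < x) :
    x * ∑' n : ℕ+, (n : ℝ) * besselK 1 (2 * x * (n : ℝ) * Real.sqrt π) =
      Real.sqrt π *
        ∫ y in Set.Ioi (0 : ℝ),
          Real.exp (-(x * y) ^ 2) *
            (y ^ (-3 : ℤ) * ∑' n : ℕ+, (n : ℝ) ^ 2 * Real.exp (-π * (n : ℝ) ^ 2 / y ^ 2)) := by
  have hπ : 0 < √π := sqrt_pos.2 pi_pos
  set F : ℕ+ → ℝ → ℝ := fun n y =>
    exp (-(x * y) ^ 2) * (y ^ (-3 : ℤ) * ((n : ℝ) ^ 2 * exp (-π * (n : ℝ) ^ 2 / y ^ 2)))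
  have hF_int (n : ℕ+) : IntegrableOn (F n) (Ioi 0) :=
    integrableOn_exp_neg_sq_mul_zpow_mul_exp x (by positivity)
  have hF_eq (n : ℕ+) : ∫ y in Ioi 0, F n y = x / √π * (n * besselK 1 (2 * x * n * √π)) := by
    rw [integral_exp_neg_sq_mul_zpow_mul_exp hx (by positivity)]
    ring
  have hF_norm (n : ℕ+) : ∫ y in Ioi 0, ‖F n y‖ = ∫ y in Ioi 0, F n y :=
    setIntegral_congr_fun measurableSet_Ioi fun y (hy : 0 < y) => norm_of_nonneg (by positivity)
  have h_summable : Summable fun n : ℕ+ => ∫ y in Ioi 0, ‖F n y‖ := by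
    simp only [hF_norm, hF_eq]
    refine Summable.mul_left _ ?_
    have := (summable_mul_besselK_one_mul (c := 2 * x * √π) (by positivity)).comp_injective
      PNat.coe_injective
    simpa [Function.comp_def, mul_right_comm _ √π] using this
  calc x * ∑' n : ℕ+, (n : ℝ) * besselK 1 (2 * x * n * √π)
      = √π * ∑' n : ℕ+, ∫ y in Ioi 0, F n y := by
        rw [tsum_congr hF_eq, tsum_mul_left, ← mul_assoc, mul_div_cancel₀ x hπ.ne']
    _ = √π * ∫ y in Ioi 0, ∑' n : ℕ+, F n y := by
        rw [integral_tsum_of_summable_integral_norm hF_int h_summable]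
    _ = _ := by simp only [F, tsum_mul_left]
end
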